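/- Let E be a regular sublinear expectation on the space X of bounded measurable real-valued functions on (Ω, F), with upper capacity C(A) := E(1_A). A sequence {ξ_n}_{n≥1} ⊂ X converges in capacity to some random variable ξ (i.e. for all ε, δ > 0 there exists N such that C({|ξ_n − ξ| > ε}) < δ for all n ≥ N) if and only if it is a Cauchy sequence in capacity (i.e. for all ε, δ > 0 there exists N such that C({|ξ_n − ξ_m| > ε}) < δ for all m, n ≥ N). -/

import Mathlib

open MeasureTheory Set Filter Topology Classical

/-- The space of bounded measurable real-valued functions on `Ω`, as a submodule of `Ω → ℝ`. -/
def BM (Ω : Type*) [MeasurableSpace Ω] : Submodule ℝ (Ω → ℝ) where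
  carrier := {f | Measurable f ∧ ∃ M : ℝ, ∀ ω, |f ω| ≤ M}
  zero_mem' := ⟨measurable_const, 0, by simp⟩
  add_mem' := by
    rintro f g ⟨hf, Mf, hMf⟩ ⟨hg, Mg, hMg⟩
    exact ⟨hf.add hg, Mf + Mg, fun ω => (abs_add_le _ _).trans (add_le_add (hMf ω) (hMg ω))⟩
  smul_mem' := by
    rintro c f ⟨hf, Mf, hMf⟩
    refine ⟨hf.const_smul c, |c| * Mf, fun ω => ?_⟩
    simp only [Pi.smul_apply, smul_eq_mul, abs_mul]
    exact mul_le_mul_of_nonneg_left (hMf ω) (abs_nonneg c)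

variable {Ω : Type*} [MeasurableSpace Ω]

lemma mem_BM {f : Ω → ℝ} (hf : Measurable f) (M : ℝ) (hM : ∀ ω, |f ω| ≤ M) : f ∈ BM Ω :=
  ⟨hf, M, hM⟩

lemma BM.measurable (ξ : BM Ω) : Measurable (ξ : Ω → ℝ) := ξ.2.1

lemma BM.bounded (ξ : BM Ω) : ∃ M : ℝ, ∀ ω, |(ξ : Ω → ℝ) ω| ≤ M := ξ.2.2

/-- A sublinear expectation on the space of bounded measurable functions. -/
structure SLE (Ω : Type*) [MeasurableSpace Ω] where
  E : BM Ω → ℝ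
  mono : ∀ ξ η : BM Ω, (∀ ω, (η : Ω → ℝ) ω ≤ (ξ : Ω → ℝ) ω) → E η ≤ E ξ
  const_preserve : ∀ (c : ℝ) (h : (fun _ : Ω => c) ∈ BM Ω), E ⟨fun _ => c, h⟩ = c
  subadd : ∀ ξ η : BM Ω, E (ξ + η) ≤ E ξ + E η
  pos_homog : ∀ (c : ℝ), 0 ≤ c → ∀ ξ : BM Ω, E (c • ξ) = c * E ξ

/-- The constant function as an element of `BM Ω`. -/
def constBM (Ω : Type*) [MeasurableSpace Ω] (c : ℝ) : BM Ω :=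
  ⟨fun _ => c, mem_BM measurable_const |c| fun _ => le_refl _⟩

/-- The indicator function of a measurable set as an element of `BM Ω`. -/
noncomputable def indBM {Ω : Type*} [MeasurableSpace Ω] (A : Set Ω) (hA : MeasurableSet A) : BM Ω :=
  ⟨A.indicator fun _ => 1,
    mem_BM (measurable_const.indicator hA) 1 fun ω => by
      by_cases h : ω ∈ A <;> simp [Set.indicator_apply, h]⟩

/-- The product of two bounded measurable functions. -/
noncomputable def mulBM (ξ η : BM Ω) : BM Ω := by
  refine ⟨fun ω => (ξ : Ω → ℝ) ω * (η : Ω → ℝ) ω, ?_⟩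
  obtain ⟨Mf, hMf⟩ := BM.bounded ξ
  obtain ⟨Mg, hMg⟩ := BM.bounded η
  refine mem_BM ((BM.measurable ξ).mul (BM.measurable η)) (max Mf 0 * max Mg 0) fun ω => ?_
  rw [abs_mul]
  exact mul_le_mul ((hMf ω).trans (le_max_left _ _)) ((hMg ω).trans (le_max_left _ _))
    (abs_nonneg _) (le_max_right _ _)

/-- The upper capacity associated to a sublinear expectation: `C(A) = E(1_A)` for measurable `A`
(junk value `0` on non-measurable sets). -/
noncomputable def SLE.cap (𝔼 : SLE Ω) (A : Set Ω) : ℝ :=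
  if h : MeasurableSet A then 𝔼.E (indBM A h) else 0

/-- The lower capacity associated to a sublinear expectation: `c(A) = -E(-1_A)` for measurable `A`
(junk value `0` on non-measurable sets). -/
noncomputable def SLE.lcap (𝔼 : SLE Ω) (A : Set Ω) : ℝ :=
  if h : MeasurableSet A then -𝔼.E (-(indBM A h)) else 0

/-- A linear expectation dominated by the sublinear expectation `𝔼`. -/
def Dominated (𝔼 : SLE Ω) (L : BM Ω →ₗ[ℝ] ℝ) : Prop := ∀ ξ : BM Ω, L ξ ≤ 𝔼.E ξ

/-- `ξ` and `η` are uncorrelated with respect to `𝔼` if `L(ξη) = L(ξ)L(η)` for every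
linear expectation `L` dominated by `𝔼`. -/
def Uncorrelated (𝔼 : SLE Ω) (ξ η : BM Ω) : Prop :=
  ∀ L : BM Ω →ₗ[ℝ] ℝ, Dominated 𝔼 L → L (mulBM ξ η) = L ξ * L η

/-- `𝔼` is regular: if `ξ n ↓ 0` pointwise then `𝔼.E (ξ n) ↓ 0`. -/
def SLE.Regular (𝔼 : SLE Ω) : Prop :=
  ∀ ξ : ℕ → BM Ω, (∀ ω, Antitone fun n => (ξ n : Ω → ℝ) ω) →
    (∀ ω, Tendsto (fun n => (ξ n : Ω → ℝ) ω) atTop (𝓝 0)) →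
    Tendsto (fun n => 𝔼.E (ξ n)) atTop (𝓝 0)

/-- The σ-field generated by `ξ a, …, ξ b`. -/
def sigmaGen (ξ : ℕ → BM Ω) (a b : ℕ) : MeasurableSpace Ω :=
  ⨆ i ∈ Set.Icc a b, MeasurableSpace.comap (fun ω => (ξ i : Ω → ℝ) ω) inferInstance

/-- `{ξ_n}_{n ≥ 1}` is an independent sequence under `𝔼`: pairwise uncorrelated, and
`C(A ∩ B) ≤ C(A) C(B)` whenever `A ∈ σ(ξ_1, …, ξ_m)` and `B ∈ σ(ξ_{m+1}, …, ξ_n)`, `m < n`. -/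
def IndepSeq (𝔼 : SLE Ω) (ξ : ℕ → BM Ω) : Prop :=
  (∀ i j, 1 ≤ i → 1 ≤ j → i ≠ j → Uncorrelated 𝔼 (ξ i) (ξ j)) ∧
  ∀ m n : ℕ, 1 ≤ m → m < n → ∀ A B : Set Ω,
    MeasurableSet[sigmaGen ξ 1 m] A → MeasurableSet[sigmaGen ξ (m + 1) n] B →
    𝔼.cap (A ∩ B) ≤ 𝔼.cap A * 𝔼.cap B

/-- Assumption (H₀): for every disjoint measurable cover `{A_n}` of `Ω`,
the series `Σ C(A_n)` has bounded partial sums. -/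
def H0 (𝔼 : SLE Ω) : Prop :=
  ∀ A : ℕ → Set Ω, (∀ n, MeasurableSet (A n)) → Pairwise (Function.onFun Disjoint A) →
    (⋃ n, A n) = Set.univ → ∃ M : ℝ, ∀ N : ℕ, ∑ n ∈ Finset.range N, 𝔼.cap (A n) < M

/-! Pass to a subsequence `g k = ξ (φ k)` along which the exceptional sets
`A k = {2⁻ᵏ < |g (k+1) - g k|}` have capacity below `2⁻ᵏ`. Off `⋃ j ≥ K, A j` the sequence `g`
converges geometrically, to within `2 · 2⁻ᴷ` of its pointwise limit `ξ₀`; regularity makes the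
capacity countably subadditive, so that union has capacity at most `2 · 2⁻ᴷ`. Hence `g → ξ₀` in
capacity, and a sequence that is Cauchy in capacity converges wherever a subsequence does. -/

lemma measurableSet_lt_abs_sub {f g : Ω → ℝ} (hf : Measurable f) (hg : Measurable g) (ε : ℝ) :
    MeasurableSet {ω | ε < |f ω - g ω|} :=
  measurableSet_lt measurable_const (hf.sub hg).abs

lemma measurable_limUnder {f : ℕ → Ω → ℝ} (hf : ∀ k, Measurable (f k)) :
    Measurable fun ω => limUnder atTop (f · ω) :=
  (StronglyMeasurable.limUnder fun k => (hf k).stronglyMeasurable).measurable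

lemma abs_sub_limUnder_le_of_abs_sub_succ_le {a : ℕ → ℝ} {K : ℕ}
    (h : ∀ j, |a (K + j + 1) - a (K + j)| ≤ (1 / 2) ^ (K + j)) :
    |a K - limUnder atTop a| ≤ 2 * (1 / 2) ^ K := by
  have hu (j : ℕ) : dist (a (K + j)) (a (K + (j + 1))) ≤ (1 / 2) ^ K * (1 / 2) ^ j := by
    rw [dist_comm, Real.dist_eq, ← pow_add]
    exact h j
  obtain ⟨c, hc⟩ :=
    cauchySeq_tendsto_of_complete (cauchySeq_of_le_geometric _ _ (by norm_num) hu)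
  have hlim : limUnder atTop a = c :=
    ((tendsto_add_atTop_iff_nat K).1 (by simpa only [add_comm] using hc)).limUnder_eq
  have hdist := dist_le_of_le_geometric_of_tendsto₀ _ _ (by norm_num) hu hc
  rw [hlim, ← Real.dist_eq]
  convert hdist using 1
  norm_num
  ring

lemma setOf_lt_abs_sub_limUnder_subset {α : Type*} (f : ℕ → α → ℝ) (K : ℕ) :
    {ω | 2 * (1 / 2) ^ K < |f K ω - limUnder atTop (f · ω)|} ⊆
      ⋃ j, {ω | (1 / 2) ^ (K + j) < |f (K + j + 1) ω - f (K + j) ω|} := by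
  intro ω hω
  by_contra hnot
  simp only [mem_iUnion, mem_ofPred_eq, not_exists, not_lt] at hω hnot
  exact hω.not_ge (abs_sub_limUnder_le_of_abs_sub_succ_le (a := (f · ω)) hnot)

namespace SLE

variable (𝔼 : SLE Ω)

def TendstoInCap (f : ℕ → Ω → ℝ) (g : Ω → ℝ) : Prop :=
  ∀ ε > 0, ∀ δ > 0, ∃ N : ℕ, ∀ n ≥ N, 𝔼.cap {ω | ε < |f n ω - g ω|} < δ

def CauchySeqInCap (f : ℕ → Ω → ℝ) : Prop :=
  ∀ ε > 0, ∀ δ > 0, ∃ N : ℕ, ∀ m ≥ N, ∀ n ≥ N, 𝔼.cap {ω | ε < |f n ω - f m ω|} < δ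

lemma cap_eq_E {A : Set Ω} (hA : MeasurableSet A) : 𝔼.cap A = 𝔼.E (indBM A hA) :=
  dif_pos hA

lemma cap_mono {A B : Set Ω} (hA : MeasurableSet A) (hB : MeasurableSet B) (hAB : A ⊆ B) :
    𝔼.cap A ≤ 𝔼.cap B := by
  rw [𝔼.cap_eq_E hA, 𝔼.cap_eq_E hB]
  exact 𝔼.mono _ _ (indicator_le_indicator_of_subset hAB fun _ => zero_le_one)

lemma cap_union_le {A B : Set Ω} (hA : MeasurableSet A) (hB : MeasurableSet B) :
    𝔼.cap (A ∪ B) ≤ 𝔼.cap A + 𝔼.cap B := by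
  rw [𝔼.cap_eq_E (hA.union hB), 𝔼.cap_eq_E hA, 𝔼.cap_eq_E hB]
  refine (𝔼.mono (indBM A hA + indBM B hB) _ fun ω => ?_).trans (𝔼.subadd _ _)
  by_cases h₁ : ω ∈ A <;> by_cases h₂ : ω ∈ B <;> simp [indBM, h₁, h₂]

lemma cap_accumulate_le {A : ℕ → Set Ω} (hA : ∀ n, MeasurableSet (A n)) (N : ℕ) :
    𝔼.cap (accumulate A N) ≤ ∑ n ∈ Finset.range (N + 1), 𝔼.cap (A n) := by
  induction N with
  | zero => simp [accumulate_zero_nat]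
  | succ N ih =>
    have hacc : MeasurableSet (accumulate A N) :=
      MeasurableSet.iUnion fun n => MeasurableSet.iUnion fun _ => hA n
    rw [accumulate_succ, Finset.sum_range_succ]
    exact (𝔼.cap_union_le hacc (hA _)).trans (by gcongr)

lemma cap_lt_abs_sub_le {f g h : Ω → ℝ} (hf : Measurable f) (hg : Measurable g)
    (hh : Measurable h) (ε : ℝ) :
    𝔼.cap {ω | ε < |f ω - h ω|} ≤
      𝔼.cap {ω | ε / 2 < |f ω - g ω|} + 𝔼.cap {ω | ε / 2 < |g ω - h ω|} := by
  refine (𝔼.cap_mono (measurableSet_lt_abs_sub hf hh ε)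
    ((measurableSet_lt_abs_sub hf hg _).union (measurableSet_lt_abs_sub hg hh _))
    fun ω hω => ?_).trans (𝔼.cap_union_le (measurableSet_lt_abs_sub hf hg _)
      (measurableSet_lt_abs_sub hg hh _))
  by_contra hnot
  simp only [mem_union, mem_ofPred_eq, not_or, not_lt] at hω hnot
  linarith [abs_sub_le (f ω) (g ω) (h ω)]

variable {𝔼}

lemma Regular.tendsto_cap_of_antitone (hreg : 𝔼.Regular) {D : ℕ → Set Ω}
    (hDm : ∀ n, MeasurableSet (D n)) (hD : Antitone D) (hempty : ⋂ n, D n = ∅) :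
    Tendsto (fun n => 𝔼.cap (D n)) atTop (𝓝 0) := by
  simp_rw [𝔼.cap_eq_E (hDm _)]
  refine hreg _ (fun ω m n hmn => indicator_le_indicator_of_subset (hD hmn)
    (fun _ => zero_le_one) ω) fun ω => ?_
  obtain ⟨n, hn⟩ : ∃ n, ω ∉ D n := by simpa using (eq_empty_iff_forall_notMem.1 hempty) ω
  refine tendsto_const_nhds.congr' (eventually_atTop.2 ⟨n, fun m hm => ?_⟩)
  simp [indBM, indicator_of_notMem fun h => hn (hD hm h)]

lemma Regular.cap_iUnion_le (hreg : 𝔼.Regular) {A : ℕ → Set Ω}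
    (hA : ∀ n, MeasurableSet (A n)) {S : ℝ}
    (hS : ∀ N, ∑ n ∈ Finset.range N, 𝔼.cap (A n) ≤ S) : 𝔼.cap (⋃ n, A n) ≤ S := by
  have hU : MeasurableSet (⋃ n, A n) := MeasurableSet.iUnion hA
  have hacc (N : ℕ) : MeasurableSet (accumulate A N) :=
    MeasurableSet.iUnion fun n => MeasurableSet.iUnion fun _ => hA n
  have hrest : Tendsto (fun N => 𝔼.cap ((⋃ n, A n) \ accumulate A N)) atTop (𝓝 0) := by
    refine hreg.tendsto_cap_of_antitone (fun N => hU.diff (hacc N))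
      (fun M N hMN => sdiff_subset_sdiff_right (monotone_accumulate hMN)) ?_
    refine eq_empty_iff_forall_notMem.2 fun ω hω => ?_
    obtain ⟨n, hn⟩ := mem_iUnion.1 (mem_iInter.1 hω 0).1
    exact (mem_iInter.1 hω n).2 (subset_accumulate hn)
  have hsplit (N : ℕ) : 𝔼.cap (⋃ n, A n) ≤ S + 𝔼.cap ((⋃ n, A n) \ accumulate A N) := by
    calc 𝔼.cap (⋃ n, A n)
        = 𝔼.cap (accumulate A N ∪ ((⋃ n, A n) \ accumulate A N)) := by
          rw [union_sdiff_cancel (accumulate_subset_iUnion N)]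
      _ ≤ 𝔼.cap (accumulate A N) + 𝔼.cap ((⋃ n, A n) \ accumulate A N) :=
          𝔼.cap_union_le (hacc N) (hU.diff (hacc N))
      _ ≤ S + 𝔼.cap ((⋃ n, A n) \ accumulate A N) := by
          gcongr; exact (𝔼.cap_accumulate_le hA N).trans (hS _)
  simpa using ge_of_tendsto (hrest.const_add S) (Eventually.of_forall hsplit)

variable {f : ℕ → Ω → ℝ} {g : Ω → ℝ}

lemma TendstoInCap.cauchySeqInCap (hf : ∀ n, Measurable (f n)) (hg : Measurable g)
    (h : 𝔼.TendstoInCap f g) : 𝔼.CauchySeqInCap f := by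
  intro ε hε δ hδ
  obtain ⟨N, hN⟩ := h (ε / 2) (by positivity) (δ / 2) (by positivity)
  refine ⟨N, fun m hm n hn => ?_⟩
  calc 𝔼.cap {ω | ε < |f n ω - f m ω|}
      ≤ 𝔼.cap {ω | ε / 2 < |f n ω - g ω|} + 𝔼.cap {ω | ε / 2 < |g ω - f m ω|} :=
        𝔼.cap_lt_abs_sub_le (hf n) hg (hf m) ε
    _ < δ / 2 + δ / 2 := by
        simp_rw [abs_sub_comm (g _)]
        exact add_lt_add (hN n hn) (hN m hm)
    _ = δ := add_halves δ

lemma CauchySeqInCap.tendstoInCap_of_comp (hf : ∀ n, Measurable (f n)) (hg : Measurable g)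
    (h : 𝔼.CauchySeqInCap f) {φ : ℕ → ℕ} (hφ : StrictMono φ)
    (hφg : 𝔼.TendstoInCap (fun k => f (φ k)) g) : 𝔼.TendstoInCap f g := by
  intro ε hε δ hδ
  obtain ⟨N, hN⟩ := h (ε / 2) (by positivity) (δ / 2) (by positivity)
  obtain ⟨K, hK⟩ := hφg (ε / 2) (by positivity) (δ / 2) (by positivity)
  refine ⟨N, fun n hn => ?_⟩
  have hNφ : N ≤ φ (max N K) := (le_max_left N K).trans (hφ.id_le _)
  calc 𝔼.cap {ω | ε < |f n ω - g ω|}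
      ≤ 𝔼.cap {ω | ε / 2 < |f n ω - f (φ (max N K)) ω|}
        + 𝔼.cap {ω | ε / 2 < |f (φ (max N K)) ω - g ω|} :=
        𝔼.cap_lt_abs_sub_le (hf n) (hf _) hg ε
    _ < δ / 2 + δ / 2 := add_lt_add (hN _ hNφ n hn) (hK _ (le_max_right N K))
    _ = δ := add_halves δ

lemma CauchySeqInCap.exists_strictMono (h : 𝔼.CauchySeqInCap f) :
    ∃ φ : ℕ → ℕ, StrictMono φ ∧
      ∀ k, 𝔼.cap {ω | (1 / 2) ^ k < |f (φ (k + 1)) ω - f (φ k) ω|} < (1 / 2) ^ k := by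
  choose N hN using fun k : ℕ => h ((1 / 2) ^ k) (by positivity) ((1 / 2) ^ k) (by positivity)
  set φ : ℕ → ℕ := fun k => k + ∑ i ∈ Finset.range (k + 1), N i
  have hφ : StrictMono φ := strictMono_nat_of_lt_succ fun k => by
    simp only [φ, Finset.sum_range_succ _ (k + 1)]
    omega
  have hNφ (k : ℕ) : N k ≤ φ k :=
    (Finset.single_le_sum (fun i _ => Nat.zero_le (N i)) (Finset.self_mem_range_succ k)).trans
      (Nat.le_add_left _ _)
  exact ⟨φ, hφ, fun k => hN k _ (hNφ k) _ ((hNφ k).trans (hφ.monotone k.le_succ))⟩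

section Regular

variable (hreg : 𝔼.Regular) (hf : ∀ k, Measurable (f k))
  (hfast : ∀ k, 𝔼.cap {ω | (1 / 2) ^ k < |f (k + 1) ω - f k ω|} < (1 / 2) ^ k)
include hreg hf hfast

lemma Regular.cap_lt_abs_sub_limUnder_le (K : ℕ) :
    𝔼.cap {ω | 2 * (1 / 2) ^ K < |f K ω - limUnder atTop (f · ω)|} ≤ 2 * (1 / 2) ^ K := by
  have hA (j : ℕ) : MeasurableSet {ω | (1 / 2) ^ (K + j) < |f (K + j + 1) ω - f (K + j) ω|} :=
    measurableSet_lt_abs_sub (hf _) (hf _) _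
  refine (𝔼.cap_mono (measurableSet_lt_abs_sub (hf K) (measurable_limUnder hf) _)
    (MeasurableSet.iUnion hA) (setOf_lt_abs_sub_limUnder_subset f K)).trans
    (hreg.cap_iUnion_le hA fun M => ?_)
  calc ∑ j ∈ Finset.range M, 𝔼.cap {ω | (1 / 2) ^ (K + j) < |f (K + j + 1) ω - f (K + j) ω|}
      ≤ ∑ j ∈ Finset.range M, (1 / 2 : ℝ) ^ (K + j) :=
        Finset.sum_le_sum fun j _ => (hfast (K + j)).le
    _ = (1 / 2) ^ K * ∑ j ∈ Finset.range M, (1 / 2 : ℝ) ^ j := by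
        simp only [pow_add, Finset.mul_sum]
    _ ≤ (1 / 2) ^ K * 2 := by gcongr; exact sum_geometric_two_le M
    _ = 2 * (1 / 2) ^ K := mul_comm _ _

lemma Regular.tendstoInCap_limUnder :
    𝔼.TendstoInCap f fun ω => limUnder atTop (f · ω) := by
  have hlim := measurable_limUnder hf
  intro ε hε δ hδ
  obtain ⟨K, hK⟩ := exists_pow_lt_of_lt_one (show 0 < min ε δ / 2 by positivity)
    (show (1 / 2 : ℝ) < 1 by norm_num)
  refine ⟨K, fun k hk => ?_⟩
  have hk : 2 * (1 / 2 : ℝ) ^ k < min ε δ := by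
    have := pow_le_pow_of_le_one (by norm_num : (0 : ℝ) ≤ 1 / 2) (by norm_num) hk
    linarith
  calc 𝔼.cap {ω | ε < |f k ω - limUnder atTop (f · ω)|}
      ≤ 𝔼.cap {ω | 2 * (1 / 2) ^ k < |f k ω - limUnder atTop (f · ω)|} :=
        𝔼.cap_mono (measurableSet_lt_abs_sub (hf k) hlim _)
          (measurableSet_lt_abs_sub (hf k) hlim _)
          fun ω hω => (hk.trans_le (min_le_left ε δ)).trans hω
    _ ≤ 2 * (1 / 2) ^ k := hreg.cap_lt_abs_sub_limUnder_le hf hfast k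
    _ < δ := hk.trans_le (min_le_right ε δ)

end Regular

end SLE

/-- Under a regular sublinear expectation, a sequence converges in capacity to
some random variable iff it is Cauchy in capacity. -/
theorem convergence_in_capacity_iff_cauchy (𝔼 : SLE Ω) (hreg : 𝔼.Regular) (ξ : ℕ → BM Ω) :
    (∃ ξ₀ : Ω → ℝ, Measurable ξ₀ ∧ ∀ ε > 0, ∀ δ > 0, ∃ N : ℕ, ∀ n ≥ N,
        𝔼.cap {ω | ε < |(ξ n : Ω → ℝ) ω - ξ₀ ω|} < δ) ↔
    (∀ ε > 0, ∀ δ > 0, ∃ N : ℕ, ∀ m ≥ N, ∀ n ≥ N,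
        𝔼.cap {ω | ε < |(ξ n : Ω → ℝ) ω - (ξ m : Ω → ℝ) ω|} < δ) := by
  change (∃ ξ₀, Measurable ξ₀ ∧ 𝔼.TendstoInCap (fun n => (ξ n : Ω → ℝ)) ξ₀) ↔
    𝔼.CauchySeqInCap fun n => (ξ n : Ω → ℝ)
  have hξ (n : ℕ) : Measurable (ξ n : Ω → ℝ) := BM.measurable (ξ n)
  refine ⟨fun ⟨ξ₀, hξ₀, hconv⟩ => hconv.cauchySeqInCap hξ hξ₀, fun hcauchy => ?_⟩
  obtain ⟨φ, hφ, hfast⟩ := hcauchy.exists_strictMono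
  have hlim := measurable_limUnder fun k => hξ (φ k)
  exact ⟨_, hlim, hcauchy.tendstoInCap_of_comp hξ hlim hφ
    (hreg.tendstoInCap_limUnder (fun k => hξ (φ k)) hfast)⟩
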